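/- arXiv:0810.5615 — 4 statements merged into one kernel-verified Lean document; each statement's English description precedes it below -/
import Mathlib

section
/- Let n ≥ 2 and let G(n) be the group presented by generators x_1,…,x_{3n} and relations R_orig(n). Then in G(n), the images of the generators satisfy x_i x_j = x_j x_i for all 1 ≤ i ≤ n and n+1 ≤ j ≤ 2n−1. -/
/-- The descending product `X b * X (b-1) * ⋯ * X a` (equal to `1` when `b < a`). -/
def dprod {G : Type*} [Monoid G] (X : ℕ → G) (a b : ℕ) : G :=
  (((List.range' a (b + 1 - a)).reverse).map X).prod

/-- The set of relators expressing the cyclic system of relations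
`[a₁, …, a_k]`, i.e. that all cyclic rotations of the product `a_k ⋯ a₁` are equal. -/
def cycRels {G : Type*} [Group G] (l : List G) : Set G :=
  { r | ∃ k : ℕ, r = (l.rotate k).reverse.prod * (l.reverse.prod)⁻¹ }

/-- The cyclic system of relations `[a₁, …, a_k]` holds in a group:
all cyclic rotations of the product `a_k ⋯ a₁` are equal. -/
def cycHolds {G : Type*} [Group G] (l : List G) : Prop :=
  ∀ k : ℕ, (l.rotate k).reverse.prod = l.reverse.prod

/-- The `i`-th (1-based) generator of the free group on `Fin N`. -/
def gen (N : ℕ) (i : ℕ) : FreeGroup (Fin N) :=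
  if h : 0 < N then FreeGroup.of ⟨(i - 1) % N, Nat.mod_lt _ h⟩ else 1

/-- The relation set `R_orig(n)` on the generators `x₁, …, x₃ₙ`. -/
def Rorig (n : ℕ) : Set (FreeGroup (Fin (3 * n))) :=
  let X : ℕ → FreeGroup (Fin (3 * n)) := gen (3 * n)
  (⋃ i ∈ Set.Icc 1 n, ⋃ j ∈ Set.Icc (n + 1) (2 * n - 1),
      cycRels [X i, (dprod X (n + 1) (j - 1))⁻¹ * X j * dprod X (n + 1) (j - 1)]) ∪
  cycRels ((List.range' 1 n).map X ++
      [(dprod X (n + 1) (2 * n - 1))⁻¹ * X (2 * n) * dprod X (n + 1) (2 * n - 1)]) ∪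
  cycRels ((dprod X 2 (2 * n) * X 1 * (dprod X 2 (2 * n))⁻¹) ::
      (List.range' (2 * n + 1) n).map X) ∪
  (⋃ i ∈ Set.Icc 2 n, ⋃ j ∈ Set.Icc (2 * n + 1) (3 * n),
      cycRels [dprod X (i + 1) (2 * n) * X i * (dprod X (i + 1) (2 * n))⁻¹, X j]) ∪
  (⋃ i ∈ Set.Icc (n + 1) (2 * n), ⋃ j ∈ Set.Icc (2 * n + 2) (3 * n), cycRels [X i, X j]) ∪
  cycRels ((List.range' (n + 1) n).map X ++ [X (2 * n + 1)])

/-- The image of the `i`-th (1-based) generator `xᵢ` in the presented group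
`G(n) = ⟨x₁,…,x₃ₙ ∣ R_orig(n)⟩`. -/
def genG (n : ℕ) (i : ℕ) : PresentedGroup (Rorig n) :=
  PresentedGroup.mk (Rorig n) (gen (3 * n) i)

/-!
Induction on `j`. The conjugator `d = x_{j-1} ⋯ x_{n+1}` in relation (1) only involves generators
with smaller index, so by induction `x_i` commutes with `d`; relation (1) says that `x_i` commutes
with `d⁻¹ x_j d`, hence `x_i` commutes with `x_j = d (d⁻¹ x_j d) d⁻¹`.
-/

lemma Commute.of_conj_right {G : Type*} [Group G] {a b d : G} (hd : Commute a d)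
    (h : Commute a (d⁻¹ * b * d)) : Commute a b := by
  simpa [mul_assoc] using hd.mul_right (h.mul_right hd.inv_right)

lemma map_dprod {M N F : Type*} [Monoid M] [Monoid N] [FunLike F M N] [MonoidHomClass F M N]
    (f : F) (X : ℕ → M) (a b : ℕ) : f (dprod X a b) = dprod (f ∘ X) a b := by
  simp [dprod, map_list_prod, List.map_map]

lemma Commute.dprod_right {M : Type*} [Monoid M] {x : M} {X : ℕ → M} {a b : ℕ}
    (h : ∀ m, a ≤ m → m ≤ b → Commute x (X m)) : Commute x (dprod X a b) := by
  refine Commute.list_prod_right _ _ fun y hy => ?_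
  simp only [List.mem_map, List.mem_reverse, List.mem_range'_1] at hy
  obtain ⟨m, ⟨ham, hmb⟩, rfl⟩ := hy
  exact h m ham (by omega)

lemma PresentedGroup.cycHolds_map_mk {α : Type*} {rels : Set (FreeGroup α)}
    {l : List (FreeGroup α)} (h : cycRels l ⊆ rels) : cycHolds (l.map (PresentedGroup.mk rels)) :=
  fun k => by
    simpa [← List.map_rotate, ← List.map_reverse, map_list_prod] using
      PresentedGroup.mk_eq_mk_of_mul_inv_mem (h ⟨k, rfl⟩)

lemma cycHolds.commute {G : Type*} [Group G] {a b : G} (h : cycHolds [a, b]) : Commute a b := by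
  simpa [List.rotate, Commute, SemiconjBy] using h 1

lemma cycRels_subset_Rorig {n i j : ℕ} (hi : 1 ≤ i ∧ i ≤ n) (hj : n + 1 ≤ j ∧ j ≤ 2 * n - 1) :
    cycRels [gen (3 * n) i, (dprod (gen (3 * n)) (n + 1) (j - 1))⁻¹ * gen (3 * n) j *
      dprod (gen (3 * n)) (n + 1) (j - 1)] ⊆ Rorig n := by
  intro r hr
  simp only [Rorig, Set.mem_union, Set.mem_iUnion, Set.mem_Icc]
  exact .inl <| .inl <| .inl <| .inl <| .inl ⟨i, hi, j, hj, hr⟩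

lemma genG_commute_conj {n i j : ℕ} (hi : 1 ≤ i ∧ i ≤ n) (hj : n + 1 ≤ j ∧ j ≤ 2 * n - 1) :
    Commute (genG n i)
      ((dprod (genG n) (n + 1) (j - 1))⁻¹ * genG n j * dprod (genG n) (n + 1) (j - 1)) := by
  have h := (PresentedGroup.cycHolds_map_mk (cycRels_subset_Rorig hi hj)).commute
  simp only [map_mul, map_inv, map_dprod] at h
  exact h

theorem commute_in_Gn_general (n : ℕ) (i j : ℕ) (hi : 1 ≤ i ∧ i ≤ n)
    (hj : n + 1 ≤ j ∧ j ≤ 2 * n - 1) :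
    genG n i * genG n j = genG n j * genG n i := by
  induction j using Nat.strong_induction_on with
  | _ j ih =>
    have hd : Commute (genG n i) (dprod (genG n) (n + 1) (j - 1)) :=
      Commute.dprod_right fun m hm hmj => ih m (by omega) ⟨hm, by omega⟩
    exact hd.of_conj_right (genG_commute_conj hi hj)

/-- In `G(n) = ⟨x₁,…,x₃ₙ ∣ R_orig(n)⟩`, the generators `xᵢ` and `xⱼ` commute for all
`1 ≤ i ≤ n` and `n+1 ≤ j ≤ 2n-1`. -/
theorem commute_in_Gn (n : ℕ) (hn : 2 ≤ n) (i j : ℕ) (hi : 1 ≤ i ∧ i ≤ n)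
    (hj : n + 1 ≤ j ∧ j ≤ 2 * n - 1) :
    genG n i * genG n j = genG n j * genG n i :=
  commute_in_Gn_general n i j hi hj
end

section
/- For every integer n ≥ 4, the normal closure in the free group F on the 2n generators x_1,…,x_{2n} of the set of relators corresponding to H_orig(n) is equal to the normal closure of the set of relators corresponding to H_simp(n). Consequently, the identity map on the generators induces a group isomorphism between the presented group ⟨x_1,…,x_{2n} | H_orig(n)⟩ and the presented group ⟨x_1,…,x_{2n} | H_simp(n)⟩. (This is the group-theoretic content of the result that the fundamental group of a real affine arrangement of 2n lines whose graph of multiple points is a unique cycle of length n, with all multiple points of multiplicity 3 and no line with more than two multiple points, has a conjugation-free geometric presentation.) -/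
/-- The index set for the quadruples of type Q2: pairs `(i,j)` with `1 ≤ i < j ≤ n`,
`j - i > 1`, `i ≠ n-1`, `j ≠ n-1` and `(i,j) ≠ (n-2,n)`. -/
def QIdx (n : ℕ) : Set (ℕ × ℕ) :=
  {p | 1 ≤ p.1 ∧ p.1 < p.2 ∧ p.2 ≤ n ∧ 1 < p.2 - p.1 ∧ p.1 ≠ n - 1 ∧ p.2 ≠ n - 1 ∧
       p ≠ (n - 2, n)}

/-- The relation set `H_orig(n)` on the generators `x₁, …, x₂ₙ`. -/
def Horig (n : ℕ) : Set (FreeGroup (Fin (2 * n))) :=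
  let X : ℕ → FreeGroup (Fin (2 * n)) := gen (2 * n)
  -- (Q1)
  (⋃ i ∈ Set.Icc 2 (n - 2),
      (cycRels [X (2 * i), X (2 * n - 3)] ∪ cycRels [X (2 * i - 1), X (2 * n - 3)] ∪
       cycRels [X (2 * i), (X (2 * n - 3))⁻¹ * X (2 * n - 2) * X (2 * n - 3)] ∪
       cycRels [X (2 * i - 1), (X (2 * n - 3))⁻¹ * X (2 * n - 2) * X (2 * n - 3)])) ∪
  -- (Q2)
  (⋃ p ∈ QIdx n,
      (cycRels [X (2 * p.1),
          (dprod X (2 * p.1 + 1) (2 * p.2 - 1))⁻¹ * X (2 * p.2) *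
            dprod X (2 * p.1 + 1) (2 * p.2 - 1)] ∪
       cycRels [X (2 * p.1 - 1),
          (dprod X (2 * p.1) (2 * p.2 - 1))⁻¹ * X (2 * p.2) *
            dprod X (2 * p.1) (2 * p.2 - 1)] ∪
       cycRels [X (2 * p.1),
          (dprod X (2 * p.1 + 1) (2 * p.2 - 2))⁻¹ * X (2 * p.2 - 1) *
            dprod X (2 * p.1 + 1) (2 * p.2 - 2)] ∪
       cycRels [X (2 * p.1 - 1),
          (dprod X (2 * p.1) (2 * p.2 - 2))⁻¹ * X (2 * p.2 - 1) *
            dprod X (2 * p.1) (2 * p.2 - 2)])) ∪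
  -- (T1)
  (cycRels [X 2, X (2 * n - 3)] ∪ cycRels [X 1, X (2 * n - 3)] ∪
   cycRels [X 1, X 2, (X (2 * n - 3))⁻¹ * X (2 * n - 2) * X (2 * n - 3)]) ∪
  -- (T2)
  (⋃ i ∈ Set.Icc 1 (n - 3),
      (cycRels [X (2 * i) * X (2 * i - 1) * (X (2 * i))⁻¹, X (2 * i + 1), X (2 * i + 2)] ∪
       cycRels [X (2 * i), X (2 * i + 2)] ∪ cycRels [X (2 * i), X (2 * i + 1)])) ∪
  -- (T3)
  (cycRels [(X (2 * n - 2) * X (2 * n - 3) * X (2 * n - 4)) * X (2 * n - 5) *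
        (X (2 * n - 2) * X (2 * n - 3) * X (2 * n - 4))⁻¹, X (2 * n - 1), X (2 * n)] ∪
   cycRels [X (2 * n - 4),
      (X (2 * n - 2) * X (2 * n - 3))⁻¹ * X (2 * n) * (X (2 * n - 2) * X (2 * n - 3))] ∪
   cycRels [X (2 * n - 4),
      (X (2 * n - 2) * X (2 * n - 3))⁻¹ * X (2 * n - 1) * (X (2 * n - 2) * X (2 * n - 3))]) ∪
  -- (T4)
  (cycRels [X (2 * n - 2), X (2 * n)] ∪ cycRels [X (2 * n - 3), X (2 * n)] ∪
   cycRels [X (2 * n - 3), X (2 * n - 2), X (2 * n - 1)])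

/-- The simplified (conjugation-free) relation set `H_simp(n)` on the generators `x₁, …, x₂ₙ`. -/
def Hsimp (n : ℕ) : Set (FreeGroup (Fin (2 * n))) :=
  let X : ℕ → FreeGroup (Fin (2 * n)) := gen (2 * n)
  -- (Q1')
  (⋃ i ∈ Set.Icc 2 (n - 2), ⋃ a ∈ ({2 * i - 1, 2 * i} : Set ℕ),
      ⋃ b ∈ ({2 * n - 3, 2 * n - 2} : Set ℕ), cycRels [X a, X b]) ∪
  -- (Q2')
  (⋃ p ∈ QIdx n, ⋃ a ∈ ({2 * p.1 - 1, 2 * p.1} : Set ℕ),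
      ⋃ b ∈ ({2 * p.2 - 1, 2 * p.2} : Set ℕ), cycRels [X a, X b]) ∪
  -- (T1')
  (cycRels [X 1, X (2 * n - 3)] ∪ cycRels [X 2, X (2 * n - 3)] ∪
   cycRels [X 1, X 2, X (2 * n - 2)]) ∪
  -- (T2')
  (⋃ i ∈ Set.Icc 1 (n - 3),
      (cycRels [X (2 * i - 1), X (2 * i + 1), X (2 * i + 2)] ∪
       cycRels [X (2 * i), X (2 * i + 1)] ∪ cycRels [X (2 * i), X (2 * i + 2)])) ∪
  -- (T3')
  (cycRels [X (2 * n - 4), X (2 * n - 1)] ∪ cycRels [X (2 * n - 4), X (2 * n)] ∪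
   cycRels [X (2 * n - 5), X (2 * n - 1), X (2 * n)]) ∪
  -- (T4')
  (cycRels [X (2 * n - 2), X (2 * n)] ∪ cycRels [X (2 * n - 3), X (2 * n)] ∪
   cycRels [X (2 * n - 3), X (2 * n - 2), X (2 * n - 1)])

/-- The image of the `i`-th (1-based) generator `xᵢ` in the presented group
`H(n) = ⟨x₁,…,x₂ₙ ∣ H_orig(n)⟩`. -/
def genH (n : ℕ) (i : ℕ) : PresentedGroup (Horig n) :=
  PresentedGroup.mk (Horig n) (gen (2 * n) i)

def CyclicRelation {H : Type*} [Group H] (l : List H) : Prop :=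
  ∀ k, (l.rotate k).reverse.prod = l.reverse.prod

section CyclicRelation

variable {G H : Type*} [Group G] [Group H]

theorem cycRels_subset_ker_iff (φ : G →* H) (l : List G) :
    cycRels l ⊆ φ.ker ↔ CyclicRelation (l.map φ) := by
  simp only [Set.subset_def, cycRels, Set.mem_ofPred_eq, forall_exists_index,
    forall_eq_apply_imp_iff, SetLike.mem_coe, MonoidHom.mem_ker, map_mul, map_inv,
    ← List.prod_hom, CyclicRelation, List.map_reverse, List.map_rotate, mul_inv_eq_one]

theorem cyclicRelation_map_iff (f : G →* H) (hf : Function.Injective f) (l : List G) :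
    CyclicRelation (l.map f) ↔ CyclicRelation l := by
  simp only [CyclicRelation, ← List.map_rotate, ← List.map_reverse, List.prod_hom, hf.eq_iff]

theorem cyclicRelation_conj_iff (t : H) (l : List H) :
    CyclicRelation (l.map fun x => t * x * t⁻¹) ↔ CyclicRelation l :=
  cyclicRelation_map_iff (MulAut.conj t).toMonoidHom (MulAut.conj t).injective l

theorem cyclicRelation_pair_iff {a b : H} : CyclicRelation [a, b] ↔ Commute a b := by
  refine ⟨fun h => (commute_iff_eq a b).2 (by simpa using h 1), fun h k => ?_⟩
  rw [← List.rotate_mod]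
  have : k % 2 = 0 ∨ k % 2 = 1 := by omega
  rcases this with hk | hk <;> simp [hk, h.eq]

theorem cyclicRelation_triple_iff {a b c : H} :
    CyclicRelation [a, b, c] ↔ Commute a (c * b) ∧ Commute (b * a) c := by
  simp only [commute_iff_eq, mul_assoc]
  refine ⟨fun h => ⟨by simpa using h 1, by simpa using h 2⟩, fun ⟨h₁, h₂⟩ k => ?_⟩
  rw [← List.rotate_mod]
  have : k % 3 = 0 ∨ k % 3 = 1 ∨ k % 3 = 2 := by omega
  rcases this with hk | hk | hk <;> simp [hk, h₁, h₂]

theorem cyclicRelation_conj_head_iff {t a b c : H} (hb : Commute t b) (hc : Commute t c) :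
    CyclicRelation [t * a * t⁻¹, b, c] ↔ CyclicRelation [a, b, c] := by
  simpa [hb.mul_inv_cancel, hc.mul_inv_cancel] using cyclicRelation_conj_iff t [a, b, c]

end CyclicRelation

section Conjugation

variable {H : Type*} [Group H]

theorem commute_conj_iff_of_commute {a u x : H} (h : Commute a u) :
    Commute a (u⁻¹ * x * u) ↔ Commute a x := by
  rw [← Commute.conj_iff u, h.symm.mul_inv_cancel]
  simp [mul_assoc]

theorem conj_mul_of_commute {p z : H} (h : Commute p z) (u : H) :
    (p * u)⁻¹ * z * (p * u) = u⁻¹ * z * u := by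
  rw [show (p * u)⁻¹ * z * (p * u) = u⁻¹ * (p⁻¹ * z * p) * u by group, h.inv_mul_cancel]

theorem horigQ1_iff {e o s t : H} :
    (Commute e s ∧ Commute o s ∧ Commute e (s⁻¹ * t * s) ∧ Commute o (s⁻¹ * t * s)) ↔
      Commute o s ∧ Commute o t ∧ Commute e s ∧ Commute e t := by
  constructor
  · rintro ⟨hes, hos, het, hot⟩
    exact ⟨hos, (commute_conj_iff_of_commute hos).1 hot, hes,
      (commute_conj_iff_of_commute hes).1 het⟩
  · rintro ⟨hos, hot, hes, het⟩
    exact ⟨hes, hos, (commute_conj_iff_of_commute hes).2 het,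
      (commute_conj_iff_of_commute hos).2 hot⟩

theorem horigT1_iff {a b s c : H} :
    (Commute b s ∧ Commute a s ∧ CyclicRelation [a, b, s⁻¹ * c * s]) ↔
      Commute a s ∧ Commute b s ∧ CyclicRelation [a, b, c] := by
  have hconj (has : Commute a s) (hbs : Commute b s) :
      CyclicRelation [a, b, s⁻¹ * c * s] ↔ CyclicRelation [a, b, c] := by
    simpa [has.symm.inv_mul_cancel, hbs.symm.inv_mul_cancel] using
      cyclicRelation_conj_iff s⁻¹ [a, b, c]
  exact ⟨fun ⟨hbs, has, h⟩ => ⟨has, hbs, (hconj has hbs).1 h⟩,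
    fun ⟨has, hbs, h⟩ => ⟨hbs, has, (hconj has hbs).2 h⟩⟩

theorem horigT2_iff {e o x y : H} :
    (CyclicRelation [e * o * e⁻¹, x, y] ∧ Commute e y ∧ Commute e x) ↔
      CyclicRelation [o, x, y] ∧ Commute e x ∧ Commute e y :=
  ⟨fun ⟨h, hy, hx⟩ => ⟨(cyclicRelation_conj_head_iff hx hy).1 h, hx, hy⟩,
    fun ⟨h, hx, hy⟩ => ⟨(cyclicRelation_conj_head_iff hx hy).2 h, hy, hx⟩⟩

theorem horigT3_iff {p f z x y : H} (hf : Commute f p) (hpx : Commute p x) (hpy : Commute p y) :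
    (CyclicRelation [p * f * z * (p * f)⁻¹, x, y] ∧ Commute f (p⁻¹ * y * p) ∧
      Commute f (p⁻¹ * x * p)) ↔
      Commute f x ∧ Commute f y ∧ CyclicRelation [z, x, y] := by
  rw [commute_conj_iff_of_commute hf, commute_conj_iff_of_commute hf]
  exact ⟨fun ⟨h, hy, hx⟩ => ⟨hx, hy, (cyclicRelation_conj_head_iff (hpx.mul_left hx)
      (hpy.mul_left hy)).1 h⟩,
    fun ⟨hx, hy, h⟩ => ⟨(cyclicRelation_conj_head_iff (hpx.mul_left hx)
      (hpy.mul_left hy)).2 h, hy, hx⟩⟩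

/-- Since `p` commutes with `x` and `y`, conjugation by `p * u` acts on them as conjugation by
`u`, which can be stripped off because it commutes with `e` and `o`. -/
theorem commute_quad_conj_iff {e o x y p u : H} (hpx : Commute p x) (hpy : Commute p y)
    (hue : Commute u e) (huo : Commute u o) :
    (Commute e ((x * (p * u))⁻¹ * y * (x * (p * u))) ∧
      Commute o ((x * (p * u) * e)⁻¹ * y * (x * (p * u) * e)) ∧
      Commute e ((p * u)⁻¹ * x * (p * u)) ∧
      Commute o ((p * u * e)⁻¹ * x * (p * u * e))) ↔
    Commute o x ∧ Commute o y ∧ Commute e x ∧ Commute e y := by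
  set z := x⁻¹ * y * x with hz
  have hpz : Commute p z := (hpx.inv_right.mul_right hpy).mul_right hpx
  have hzy {a : H} (hax : Commute a x) : Commute a z ↔ Commute a y :=
    commute_conj_iff_of_commute hax
  have hue' {w : H} (hew : Commute e w) : (u * e)⁻¹ * w * (u * e) = u⁻¹ * w * u := by
    rw [hue.eq, conj_mul_of_commute hew]
  have h₁ : (x * (p * u))⁻¹ * y * (x * (p * u)) = u⁻¹ * z * u := by
    rw [← conj_mul_of_commute hpz u, hz]; group
  have h₂ : (x * (p * u) * e)⁻¹ * y * (x * (p * u) * e) = (u * e)⁻¹ * z * (u * e) := by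
    rw [← conj_mul_of_commute hpz (u * e), hz]; group
  have h₄ : (p * u * e)⁻¹ * x * (p * u * e) = (u * e)⁻¹ * x * (u * e) := by
    rw [mul_assoc p u e, conj_mul_of_commute hpx]
  rw [h₁, h₂, h₄, conj_mul_of_commute hpx, commute_conj_iff_of_commute hue.symm,
    commute_conj_iff_of_commute hue.symm]
  constructor
  · rintro ⟨hez, hoz, hex, hox⟩
    have hey := (hzy hex).1 hez
    rw [hue' hex, commute_conj_iff_of_commute huo.symm] at hox
    rw [hue' hez, commute_conj_iff_of_commute huo.symm, hzy hox] at hoz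
    exact ⟨hox, hoz, hex, hey⟩
  · rintro ⟨hox, hoy, hex, hey⟩
    have hez := (hzy hex).2 hey
    rw [hue' hez, hue' hex, commute_conj_iff_of_commute huo.symm,
      commute_conj_iff_of_commute huo.symm, hzy hox]
    exact ⟨hez, hoy, hex, hox⟩

end Conjugation

section DescendingProduct

variable {G H : Type*} [Group G] [Group H]

theorem dprod_map (φ : G →* H) (X : ℕ → G) (a b : ℕ) :
    φ (dprod X a b) = dprod (fun k => φ (X k)) a b := by
  simp only [dprod, ← List.prod_hom, List.map_map]
  rfl

variable (X : ℕ → H)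

theorem dprod_of_lt {a b : ℕ} (h : b < a) : dprod X a b = 1 := by
  simp [dprod, show b + 1 - a = 0 by omega]

theorem dprod_self (a : ℕ) : dprod X a a = X a := by
  simp [dprod]

theorem dprod_eq_mul {a b c : ℕ} (hac : a ≤ c + 1) (hcb : c ≤ b) :
    dprod X a b = dprod X (c + 1) b * dprod X a c := by
  have h := List.range'_append (s := a) (m := c + 1 - a) (n := b - c) (step := 1)
  rw [show a + 1 * (c + 1 - a) = c + 1 by omega, show c + 1 - a + (b - c) = b + 1 - a by omega]
    at h
  rw [dprod, dprod, dprod, ← h, show b + 1 - (c + 1) = b - c by omega, List.reverse_append,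
    List.map_append, List.prod_append]

theorem dprod_succ (a : ℕ) : dprod X a (a + 1) = X (a + 1) * X a := by
  rw [dprod_eq_mul X (c := a) (Nat.le_succ a) (Nat.le_succ a), dprod_self, dprod_self]

theorem Commute.dprod_right_s10 {g : H} {a b : ℕ} (h : ∀ k, a ≤ k → k ≤ b → Commute g (X k)) :
    Commute g (dprod X a b) := by
  refine Commute.list_prod_right _ _ fun x hx => ?_
  obtain ⟨k, hk, rfl⟩ := List.mem_map.1 hx
  rw [List.mem_reverse, List.mem_range'_1] at hk
  exact h k hk.1 (by omega)

end DescendingProduct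

section Q2

variable {H : Type*} [Group H] (Y : ℕ → H)

def Q2Relations (i j : ℕ) : Prop :=
  Commute (Y (2*i)) ((dprod Y (2*i+1) (2*j-1))⁻¹ * Y (2*j) * dprod Y (2*i+1) (2*j-1)) ∧
  Commute (Y (2*i-1)) ((dprod Y (2*i) (2*j-1))⁻¹ * Y (2*j) * dprod Y (2*i) (2*j-1)) ∧
  Commute (Y (2*i)) ((dprod Y (2*i+1) (2*j-2))⁻¹ * Y (2*j-1) * dprod Y (2*i+1) (2*j-2)) ∧
  Commute (Y (2*i-1)) ((dprod Y (2*i) (2*j-2))⁻¹ * Y (2*j-1) * dprod Y (2*i) (2*j-2))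

def PairsCommute (i j : ℕ) : Prop :=
  Commute (Y (2*i-1)) (Y (2*j-1)) ∧ Commute (Y (2*i-1)) (Y (2*j)) ∧
  Commute (Y (2*i)) (Y (2*j-1)) ∧ Commute (Y (2*i)) (Y (2*j))

theorem q2Relations_iff_pairsCommute_of_le {i j k : ℕ} (hi : 1 ≤ i) (hik : i < k) (hkj : k < j)
    (hpx : Commute (dprod Y (2*k+1) (2*j-2)) (Y (2*j-1)))
    (hpy : Commute (dprod Y (2*k+1) (2*j-2)) (Y (2*j)))
    (ht2 : CyclicRelation [Y (2*i-1), Y (2*i+1), Y (2*i+2)] ∧ Commute (Y (2*i)) (Y (2*i+1)) ∧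
      Commute (Y (2*i)) (Y (2*i+2)))
    (hW : ∀ m, i + 2 ≤ m → m ≤ k → PairsCommute Y i m) :
    Q2Relations Y i j ↔ PairsCommute Y i j := by
  have hD1 : dprod Y (2*i+1) (2*j-1) = Y (2*j-1) * dprod Y (2*i+1) (2*j-2) := by
    rw [dprod_eq_mul Y (c := 2*j-2) (by omega) (by omega), show 2*j-2+1 = 2*j-1 by omega,
      dprod_self]
  have hD2 : dprod Y (2*i) (2*j-1) = dprod Y (2*i+1) (2*j-1) * Y (2*i) := by
    rw [dprod_eq_mul Y (c := 2*i) (by omega) (by omega), dprod_self]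
  have hD4 : dprod Y (2*i) (2*j-2) = dprod Y (2*i+1) (2*j-2) * Y (2*i) := by
    rw [dprod_eq_mul Y (c := 2*i) (by omega) (by omega), dprod_self]
  have hC : dprod Y (2*i+1) (2*j-2) = dprod Y (2*k+1) (2*j-2) * dprod Y (2*i+1) (2*k) :=
    dprod_eq_mul Y (by omega) (by omega)
  have hu : dprod Y (2*i+1) (2*k) = dprod Y (2*i+3) (2*k) * (Y (2*i+2) * Y (2*i+1)) := by
    rw [dprod_eq_mul Y (c := 2*i+2) (by omega) (by omega), dprod_succ]
  have hW' : ∀ l, 2*i+3 ≤ l → l ≤ 2*k → Commute (Y (2*i-1)) (Y l) ∧ Commute (Y (2*i)) (Y l) := by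
    intro l h₁ h₂
    obtain ⟨m, hl | hl⟩ : ∃ m, l = 2*m-1 ∨ l = 2*m := ⟨(l + 1) / 2, by omega⟩ <;>
    obtain ⟨hoo, hoe, heo, hee⟩ := hW m (by omega) (by omega) <;> subst hl
    exacts [⟨hoo, heo⟩, ⟨hoe, hee⟩]
  obtain ⟨hT, heY₁, heY₂⟩ := ht2
  have hue : Commute (dprod Y (2*i+1) (2*k)) (Y (2*i)) := by
    rw [hu]
    exact ((Commute.dprod_right_s10 Y fun l h₁ h₂ => (hW' l h₁ h₂).2).mul_right
      (heY₂.mul_right heY₁)).symm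
  have huo : Commute (dprod Y (2*i+1) (2*k)) (Y (2*i-1)) := by
    rw [hu]
    exact ((Commute.dprod_right_s10 Y fun l h₁ h₂ => (hW' l h₁ h₂).1).mul_right
      (cyclicRelation_triple_iff.1 hT).1).symm
  rw [Q2Relations, hD2, hD4, hD1, hC, commute_quad_conj_iff hpx hpy hue huo, PairsCommute]

theorem mem_QIdx_iff {n i j : ℕ} : (i, j) ∈ QIdx n ↔
    1 ≤ i ∧ i < j ∧ j ≤ n ∧ 1 < j - i ∧ i ≠ n - 1 ∧ j ≠ n - 1 ∧ ¬(i = n - 2 ∧ j = n) := by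
  simp [QIdx, Prod.ext_iff]

variable {n : ℕ} {Y}

theorem q2Relations_iff_pairsCommute
    (hq1 : ∀ i ∈ Set.Icc 2 (n - 2), Commute (Y (2*i-1)) (Y (2*n-3)) ∧
      Commute (Y (2*i-1)) (Y (2*n-2)) ∧ Commute (Y (2*i)) (Y (2*n-3)) ∧
      Commute (Y (2*i)) (Y (2*n-2)))
    (ht2 : ∀ i ∈ Set.Icc 1 (n - 3), CyclicRelation [Y (2*i-1), Y (2*i+1), Y (2*i+2)] ∧
      Commute (Y (2*i)) (Y (2*i+1)) ∧ Commute (Y (2*i)) (Y (2*i+2)))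
    (ht4 : Commute (Y (2*n-2)) (Y (2*n)) ∧ Commute (Y (2*n-3)) (Y (2*n)) ∧
      CyclicRelation [Y (2*n-3), Y (2*n-2), Y (2*n-1)])
    {i j : ℕ} (hij : (i, j) ∈ QIdx n) (hlow : ∀ m < j, (i, m) ∈ QIdx n → PairsCommute Y i m) :
    Q2Relations Y i j ↔ PairsCommute Y i j := by
  rw [mem_QIdx_iff] at hij
  have ht2i := ht2 i ⟨hij.1, by omega⟩
  by_cases hspecial : i = 1 ∧ j = n
  · obtain ⟨rfl, rfl⟩ := hspecial
    have hp : dprod Y (2*(j-2)+1) (2*j-2) = Y (2*j-2) * Y (2*j-3) := by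
      rw [show 2*(j-2)+1 = 2*j-3 by omega, show 2*j-2 = 2*j-3+1 by omega, dprod_succ]
    refine q2Relations_iff_pairsCommute_of_le Y (k := j - 2) le_rfl (by omega) (by omega)
      ?_ ?_ ht2i fun m h₁ h₂ => hlow m (by omega) (mem_QIdx_iff.2 (by omega))
    · rw [hp]
      exact (cyclicRelation_triple_iff.1 ht4.2.2).2
    · rw [hp]
      exact ht4.1.mul_left ht4.2.1
  · have hp : dprod Y (2*(j-1)+1) (2*j-2) = 1 := dprod_of_lt Y (by omega)
    refine q2Relations_iff_pairsCommute_of_le Y (k := j - 1) hij.1 (by omega) (by omega)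
      (hp ▸ Commute.one_left _) (hp ▸ Commute.one_left _) ht2i fun m h₁ h₂ => ?_
    by_cases hm : m = n - 1
    · rw [PairsCommute, hm, show 2*(n-1)-1 = 2*n-3 by omega, show 2*(n-1) = 2*n-2 by omega]
      exact hq1 i ⟨by omega, by omega⟩
    · exact hlow m (by omega) (mem_QIdx_iff.2 (by omega))

theorem forall_q2Relations_iff
    (hq1 : ∀ i ∈ Set.Icc 2 (n - 2), Commute (Y (2*i-1)) (Y (2*n-3)) ∧
      Commute (Y (2*i-1)) (Y (2*n-2)) ∧ Commute (Y (2*i)) (Y (2*n-3)) ∧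
      Commute (Y (2*i)) (Y (2*n-2)))
    (ht2 : ∀ i ∈ Set.Icc 1 (n - 3), CyclicRelation [Y (2*i-1), Y (2*i+1), Y (2*i+2)] ∧
      Commute (Y (2*i)) (Y (2*i+1)) ∧ Commute (Y (2*i)) (Y (2*i+2)))
    (ht4 : Commute (Y (2*n-2)) (Y (2*n)) ∧ Commute (Y (2*n-3)) (Y (2*n)) ∧
      CyclicRelation [Y (2*n-3), Y (2*n-2), Y (2*n-1)]) :
    (∀ p ∈ QIdx n, Q2Relations Y p.1 p.2) ↔ ∀ p ∈ QIdx n, PairsCommute Y p.1 p.2 := by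
  refine ⟨fun h => ?_, fun h p hp =>
    (q2Relations_iff_pairsCommute hq1 ht2 ht4 hp fun m _ hm => h (p.1, m) hm).2 (h p hp)⟩
  suffices ∀ j i, (i, j) ∈ QIdx n → PairsCommute Y i j from fun p hp => this p.2 p.1 hp
  intro j
  induction j using Nat.strong_induction_on with
  | _ j ih => exact fun i hij =>
    (q2Relations_iff_pairsCommute hq1 ht2 ht4 hij fun m hm him => ih m hm i him).1 (h (i, j) hij)

end Q2

section Relations

variable {H : Type*} [Group H]

structure HorigRelations (n : ℕ) (Y : ℕ → H) : Prop where
  q1 : ∀ i ∈ Set.Icc 2 (n - 2),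
    Commute (Y (2*i)) (Y (2*n-3)) ∧ Commute (Y (2*i-1)) (Y (2*n-3)) ∧
    Commute (Y (2*i)) ((Y (2*n-3))⁻¹ * Y (2*n-2) * Y (2*n-3)) ∧
    Commute (Y (2*i-1)) ((Y (2*n-3))⁻¹ * Y (2*n-2) * Y (2*n-3))
  q2 : ∀ p ∈ QIdx n, Q2Relations Y p.1 p.2
  t1 : Commute (Y 2) (Y (2*n-3)) ∧ Commute (Y 1) (Y (2*n-3)) ∧
    CyclicRelation [Y 1, Y 2, (Y (2*n-3))⁻¹ * Y (2*n-2) * Y (2*n-3)]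
  t2 : ∀ i ∈ Set.Icc 1 (n - 3),
    CyclicRelation [Y (2*i) * Y (2*i-1) * (Y (2*i))⁻¹, Y (2*i+1), Y (2*i+2)] ∧
    Commute (Y (2*i)) (Y (2*i+2)) ∧ Commute (Y (2*i)) (Y (2*i+1))
  t3 : CyclicRelation [Y (2*n-2) * Y (2*n-3) * Y (2*n-4) * Y (2*n-5) *
      (Y (2*n-2) * Y (2*n-3) * Y (2*n-4))⁻¹, Y (2*n-1), Y (2*n)] ∧
    Commute (Y (2*n-4)) ((Y (2*n-2) * Y (2*n-3))⁻¹ * Y (2*n) * (Y (2*n-2) * Y (2*n-3))) ∧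
    Commute (Y (2*n-4)) ((Y (2*n-2) * Y (2*n-3))⁻¹ * Y (2*n-1) * (Y (2*n-2) * Y (2*n-3)))
  t4 : Commute (Y (2*n-2)) (Y (2*n)) ∧ Commute (Y (2*n-3)) (Y (2*n)) ∧
    CyclicRelation [Y (2*n-3), Y (2*n-2), Y (2*n-1)]

structure HsimpRelations (n : ℕ) (Y : ℕ → H) : Prop where
  q1 : ∀ i ∈ Set.Icc 2 (n - 2),
    Commute (Y (2*i-1)) (Y (2*n-3)) ∧ Commute (Y (2*i-1)) (Y (2*n-2)) ∧
    Commute (Y (2*i)) (Y (2*n-3)) ∧ Commute (Y (2*i)) (Y (2*n-2))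
  q2 : ∀ p ∈ QIdx n, PairsCommute Y p.1 p.2
  t1 : Commute (Y 1) (Y (2*n-3)) ∧ Commute (Y 2) (Y (2*n-3)) ∧
    CyclicRelation [Y 1, Y 2, Y (2*n-2)]
  t2 : ∀ i ∈ Set.Icc 1 (n - 3), CyclicRelation [Y (2*i-1), Y (2*i+1), Y (2*i+2)] ∧
    Commute (Y (2*i)) (Y (2*i+1)) ∧ Commute (Y (2*i)) (Y (2*i+2))
  t3 : Commute (Y (2*n-4)) (Y (2*n-1)) ∧ Commute (Y (2*n-4)) (Y (2*n)) ∧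
    CyclicRelation [Y (2*n-5), Y (2*n-1), Y (2*n)]
  t4 : Commute (Y (2*n-2)) (Y (2*n)) ∧ Commute (Y (2*n-3)) (Y (2*n)) ∧
    CyclicRelation [Y (2*n-3), Y (2*n-2), Y (2*n-1)]

theorem horig_subset_ker_iff {n : ℕ} (φ : FreeGroup (Fin (2 * n)) →* H) :
    Horig n ⊆ φ.ker ↔ HorigRelations n fun k => φ (gen (2 * n) k) := by
  simp only [Horig, Set.union_subset_iff, Set.iUnion₂_subset_iff, cycRels_subset_ker_iff,
    List.map_cons, List.map_nil, map_mul, map_inv, dprod_map, cyclicRelation_pair_iff, and_assoc]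
  constructor
  · rintro ⟨q1, q2, t1₁, t1₂, t1₃, t2, t3₁, t3₂, t3₃, t4⟩
    exact ⟨q1, q2, ⟨t1₁, t1₂, t1₃⟩, t2, ⟨t3₁, t3₂, t3₃⟩, t4⟩
  · rintro ⟨q1, q2, ⟨t1₁, t1₂, t1₃⟩, t2, ⟨t3₁, t3₂, t3₃⟩, t4⟩
    exact ⟨q1, q2, t1₁, t1₂, t1₃, t2, t3₁, t3₂, t3₃, t4⟩

theorem hsimp_subset_ker_iff {n : ℕ} (φ : FreeGroup (Fin (2 * n)) →* H) :
    Hsimp n ⊆ φ.ker ↔ HsimpRelations n fun k => φ (gen (2 * n) k) := by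
  simp only [Hsimp, Set.union_subset_iff, Set.iUnion₂_subset_iff, cycRels_subset_ker_iff,
    List.map_cons, List.map_nil, cyclicRelation_pair_iff, Set.mem_insert_iff,
    Set.mem_singleton_iff, forall_eq_or_imp, forall_eq, and_assoc]
  constructor
  · rintro ⟨q1, q2, t1₁, t1₂, t1₃, t2, t3₁, t3₂, t3₃, t4⟩
    exact ⟨q1, q2, ⟨t1₁, t1₂, t1₃⟩, t2, ⟨t3₁, t3₂, t3₃⟩, t4⟩
  · rintro ⟨q1, q2, ⟨t1₁, t1₂, t1₃⟩, t2, ⟨t3₁, t3₂, t3₃⟩, t4⟩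
    exact ⟨q1, q2, t1₁, t1₂, t1₃, t2, t3₁, t3₂, t3₃, t4⟩

theorem horigRelations_iff_hsimpRelations {n : ℕ} (hn : 4 ≤ n) {Y : ℕ → H} :
    HorigRelations n Y ↔ HsimpRelations n Y := by
  constructor
  · rintro ⟨q1, q2, t1, t2, t3, t4⟩
    have q1' := fun i hi => horigQ1_iff.1 (q1 i hi)
    have t2' := fun i hi => horigT2_iff.1 (t2 i hi)
    have hf := q1' (n - 2) ⟨by omega, le_rfl⟩
    rw [show 2 * (n - 2) = 2 * n - 4 by omega] at hf
    exact ⟨q1', (forall_q2Relations_iff q1' t2' t4).1 q2, horigT1_iff.1 t1, t2',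
      (horigT3_iff (hf.2.2.2.mul_right hf.2.2.1) (cyclicRelation_triple_iff.1 t4.2.2).2
        (t4.1.mul_left t4.2.1)).1 t3, t4⟩
  · rintro ⟨q1, q2, t1, t2, t3, t4⟩
    have hf := q1 (n - 2) ⟨by omega, le_rfl⟩
    rw [show 2 * (n - 2) = 2 * n - 4 by omega] at hf
    exact ⟨fun i hi => horigQ1_iff.2 (q1 i hi), (forall_q2Relations_iff q1 t2 t4).2 q2,
      horigT1_iff.2 t1, fun i hi => horigT2_iff.2 (t2 i hi),
      (horigT3_iff (hf.2.2.2.mul_right hf.2.2.1) (cyclicRelation_triple_iff.1 t4.2.2).2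
        (t4.1.mul_left t4.2.1)).2 t3, t4⟩

theorem horig_subset_iff_hsimp_subset {n : ℕ} (hn : 4 ≤ n)
    (N : Subgroup (FreeGroup (Fin (2 * n)))) [N.Normal] : Horig n ⊆ N ↔ Hsimp n ⊆ N := by
  rw [← QuotientGroup.ker_mk' N, horig_subset_ker_iff, hsimp_subset_ker_iff,
    horigRelations_iff_hsimpRelations hn]

end Relations

/-- The normal closures of `H_orig(n)` and `H_simp(n)` in the free group on `x₁, …, x₂ₙ`
coincide, and consequently the identity on the generators induces an isomorphism
`⟨x₁,…,x₂ₙ ∣ H_orig(n)⟩ ≃ ⟨x₁,…,x₂ₙ ∣ H_simp(n)⟩`. -/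
theorem conjugation_free_cycle_length_n (n : ℕ) (hn : 4 ≤ n) :
    Subgroup.normalClosure (Horig n) = Subgroup.normalClosure (Hsimp n) ∧
    ∃ e : PresentedGroup (Horig n) ≃* PresentedGroup (Hsimp n),
      ∀ a : Fin (2 * n), e (PresentedGroup.of a) = PresentedGroup.of a := by
  have key : Subgroup.normalClosure (Horig n) = Subgroup.normalClosure (Hsimp n) :=
    le_antisymm
      (Subgroup.normalClosure_le_normal ((horig_subset_iff_hsimp_subset hn _).2
        Subgroup.subset_normalClosure))
      (Subgroup.normalClosure_le_normal ((horig_subset_iff_hsimp_subset hn _).1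
        Subgroup.subset_normalClosure))
  exact ⟨key, QuotientGroup.quotientMulEquivOfEq key, fun _ => rfl⟩
end

section
/- Let n ≥ 4 and let H(n) be the group presented by generators x_1,…,x_{2n} and relations H_orig(n). Then in H(n) the cyclic relation [x_1, x_2, x_{2n-2}] holds, i.e. x_{2n-2} x_2 x_1 = x_2 x_1 x_{2n-2} = x_1 x_{2n-2} x_2. -/
/-! Conjugation by `x₂ₙ₋₃`, which commutes with `x₁` and `x₂` by (T1), carries the relation
`[x₁, x₂, x₂ₙ₋₃⁻¹ x₂ₙ₋₂ x₂ₙ₋₃]` of (T1) to `[x₁, x₂, x₂ₙ₋₂]`. -/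

/-- The relation `[a, b, c]` in the notation of the paper. -/
def CyclicRel3 {G : Type*} [Group G] (a b c : G) : Prop :=
  c * b * a = b * a * c ∧ b * a * c = a * c * b

namespace CyclicRel3

variable {G H : Type*} [Group G] [Group H] {a b c : G}

theorem map (f : G →* H) (h : CyclicRel3 a b c) : CyclicRel3 (f a) (f b) (f c) := by
  obtain ⟨h₁, h₂⟩ := h
  exact ⟨by simpa only [map_mul] using congrArg f h₁, by simpa only [map_mul] using congrArg f h₂⟩

theorem of_conj {t d : G} (ha : Commute t a) (hb : Commute t b)
    (h : CyclicRel3 a b (t⁻¹ * d * t)) : CyclicRel3 a b d := by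
  have hd : t * (t⁻¹ * d * t) * t⁻¹ = d := by group
  simpa only [MulEquiv.coe_toMonoidHom, MulAut.conj_apply, ha.mul_inv_cancel, hb.mul_inv_cancel,
    hd] using h.map (MulAut.conj t).toMonoidHom

end CyclicRel3

namespace PresentedGroup

variable {α : Type*} {rels : Set (FreeGroup α)}

theorem mk_rotate_prod_eq_of_cycRels_subset {l : List (FreeGroup α)} (h : cycRels l ⊆ rels)
    (k : ℕ) : mk rels (l.rotate k).reverse.prod = mk rels l.reverse.prod :=
  mk_eq_mk_of_mul_inv_mem (h ⟨k, rfl⟩)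

theorem commute_mk_of_cycRels_subset {a b : FreeGroup α} (h : cycRels [a, b] ⊆ rels) :
    Commute (mk rels a) (mk rels b) := by
  have h₁ := mk_rotate_prod_eq_of_cycRels_subset h 1
  simp only [List.rotate_cons_succ, List.rotate_zero, List.cons_append, List.nil_append,
    List.reverse_cons, List.reverse_nil, List.prod_cons, List.prod_nil, map_mul, mul_one] at h₁
  exact h₁

theorem cyclicRel3_mk_of_cycRels_subset {a b c : FreeGroup α} (h : cycRels [a, b, c] ⊆ rels) :
    CyclicRel3 (mk rels a) (mk rels b) (mk rels c) := by
  have h₁ := mk_rotate_prod_eq_of_cycRels_subset h 1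
  have h₂ := mk_rotate_prod_eq_of_cycRels_subset h 2
  simp only [List.rotate_cons_succ, List.rotate_zero, List.cons_append, List.nil_append,
    List.reverse_cons, List.reverse_nil, List.prod_cons, List.prod_nil, map_mul, mul_one] at h₁ h₂
  exact ⟨by simpa only [mul_assoc] using h₂.symm, by simpa only [mul_assoc] using h₂.trans h₁.symm⟩

end PresentedGroup

theorem T1_simplified_general (n : ℕ) :
    genH n (2 * n - 2) * genH n 2 * genH n 1 = genH n 2 * genH n 1 * genH n (2 * n - 2) ∧
    genH n 2 * genH n 1 * genH n (2 * n - 2) = genH n 1 * genH n (2 * n - 2) * genH n 2 := by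
  let X := gen (2 * n)
  have hT1 : cycRels [X 2, X (2 * n - 3)] ∪ cycRels [X 1, X (2 * n - 3)] ∪
      cycRels [X 1, X 2, (X (2 * n - 3))⁻¹ * X (2 * n - 2) * X (2 * n - 3)] ⊆ Horig n :=
    fun _ hr => Or.inl (Or.inl (Or.inl (Or.inr hr)))
  have h₁ := PresentedGroup.commute_mk_of_cycRels_subset (fun _ hr => hT1 (Or.inl (Or.inr hr)))
  have h₂ := PresentedGroup.commute_mk_of_cycRels_subset (fun _ hr => hT1 (Or.inl (Or.inl hr)))
  have hconj := PresentedGroup.cyclicRel3_mk_of_cycRels_subset (fun _ hr => hT1 (Or.inr hr))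
  simp only [map_mul, map_inv] at hconj
  exact hconj.of_conj h₁.symm h₂.symm

/-- In `H(n) = ⟨x₁,…,x₂ₙ ∣ H_orig(n)⟩` the cyclic relation `[x₁, x₂, x₂ₙ₋₂]` holds:
`x₂ₙ₋₂ x₂ x₁ = x₂ x₁ x₂ₙ₋₂ = x₁ x₂ₙ₋₂ x₂`. -/
theorem T1_simplified (n : ℕ) (hn : 4 ≤ n) :
    genH n (2 * n - 2) * genH n 2 * genH n 1 = genH n 2 * genH n 1 * genH n (2 * n - 2) ∧
    genH n 2 * genH n 1 * genH n (2 * n - 2) = genH n 1 * genH n (2 * n - 2) * genH n 2 :=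
  T1_simplified_general n
end

section
/- Let n ≥ 4 and let H(n) be the group presented by generators x_1,…,x_{2n} and relations H_orig(n). Then in H(n), for every 1 ≤ i ≤ n−3, the cyclic relation [x_{2i-1}, x_{2i+1}, x_{2i+2}] holds, i.e. x_{2i+2} x_{2i+1} x_{2i-1} = x_{2i+1} x_{2i-1} x_{2i+2} = x_{2i-1} x_{2i+2} x_{2i+1}. -/
/-- The paper's `[a₁, …, a_k]` as a property of elements of `G` rather than a set of relators. -/
def IsCyclicRel {G : Type*} [Monoid G] (l : List G) : Prop :=
  ∀ k : ℕ, (l.rotate k).reverse.prod = l.reverse.prod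

namespace IsCyclicRel

variable {G H : Type*}

theorem map [Monoid G] [Monoid H] (f : G →* H) {l : List G} (h : IsCyclicRel l) :
    IsCyclicRel (l.map f) := fun k => by
  rw [← List.map_rotate, ← List.map_reverse, ← List.map_reverse, ← map_list_prod,
    ← map_list_prod, h k]

theorem commute [Monoid G] {a b : G} (h : IsCyclicRel [a, b]) : Commute a b := by
  have h1 := h 1
  simp only [List.rotate_cons_succ, List.rotate_zero, List.cons_append, List.nil_append,
    List.reverse_cons, List.reverse_nil, List.prod_cons, List.prod_nil, mul_one] at h1
  exact h1

theorem triple_eqs [Monoid G] {a b c : G} (h : IsCyclicRel [a, b, c]) :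
    c * b * a = b * a * c ∧ b * a * c = a * c * b := by
  have h1 := h 1
  have h2 := h 2
  simp only [List.rotate_cons_succ, List.rotate_zero, List.cons_append, List.nil_append,
    List.reverse_cons, List.reverse_nil, List.prod_cons, List.prod_nil, mul_one] at h1 h2
  simp only [mul_assoc]
  exact ⟨h2.symm, h2.trans h1.symm⟩

theorem of_conj [Group G] {y a b c : G} (h : IsCyclicRel [y * a * y⁻¹, b, c])
    (hb : Commute y b) (hc : Commute y c) : IsCyclicRel [a, b, c] := by
  have hfix : ∀ {x : G}, Commute y x → MulAut.conj y⁻¹ x = x := fun hx => by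
    rw [MulAut.conj_apply, inv_inv, hx.inv_left.eq, inv_mul_cancel_right]
  have hmap : [y * a * y⁻¹, b, c].map (MulAut.conj y⁻¹).toMonoidHom = [a, b, c] := by
    simp only [List.map_cons, List.map_nil, MulEquiv.coe_toMonoidHom, hfix hb, hfix hc,
      MulAut.conj_apply, inv_inv, List.cons.injEq, and_true]
    group
  simpa only [hmap] using h.map (MulAut.conj y⁻¹).toMonoidHom

end IsCyclicRel

theorem isCyclicRel_mk_of_subset {α : Type*} {rels : Set (FreeGroup α)}
    {l : List (FreeGroup α)} (h : cycRels l ⊆ rels) :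
    IsCyclicRel (l.map (PresentedGroup.mk rels)) := fun k => by
  have hrel : PresentedGroup.mk rels ((l.rotate k).reverse.prod * l.reverse.prod⁻¹) = 1 :=
    (QuotientGroup.eq_one_iff _).mpr (Subgroup.subset_normalClosure (h ⟨k, rfl⟩))
  rw [map_mul, map_inv, mul_inv_eq_one, map_list_prod, map_list_prod] at hrel
  rwa [← List.map_rotate, ← List.map_reverse, ← List.map_reverse]

theorem cycRels_T2_subset_Horig {n i : ℕ} (hi : i ∈ Set.Icc 1 (n - 3)) :
    cycRels [gen (2 * n) (2 * i) * gen (2 * n) (2 * i - 1) * (gen (2 * n) (2 * i))⁻¹,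
        gen (2 * n) (2 * i + 1), gen (2 * n) (2 * i + 2)] ∪
      cycRels [gen (2 * n) (2 * i), gen (2 * n) (2 * i + 2)] ∪
      cycRels [gen (2 * n) (2 * i), gen (2 * n) (2 * i + 1)] ⊆ Horig n := fun _ hr =>
  Or.inl (Or.inl (Or.inr (Set.mem_biUnion hi hr)))

theorem T2_simplified_general (n : ℕ) (i : ℕ) (hi : 1 ≤ i ∧ i ≤ n - 3) :
    genH n (2 * i + 2) * genH n (2 * i + 1) * genH n (2 * i - 1) =
      genH n (2 * i + 1) * genH n (2 * i - 1) * genH n (2 * i + 2) ∧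
    genH n (2 * i + 1) * genH n (2 * i - 1) * genH n (2 * i + 2) =
      genH n (2 * i - 1) * genH n (2 * i + 2) * genH n (2 * i + 1) := by
  have hsub := cycRels_T2_subset_Horig hi
  simp only [Set.union_subset_iff] at hsub
  obtain ⟨⟨hT2, hcomm₂⟩, hcomm₁⟩ := hsub
  have hconj := isCyclicRel_mk_of_subset hT2
  simp only [List.map_cons, List.map_nil, map_mul, map_inv] at hconj
  exact (hconj.of_conj (isCyclicRel_mk_of_subset hcomm₁).commute
    (isCyclicRel_mk_of_subset hcomm₂).commute).triple_eqs

/-- In `H(n) = ⟨x₁,…,x₂ₙ ∣ H_orig(n)⟩`, for every `1 ≤ i ≤ n-3` the cyclic relation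
`[x₂ᵢ₋₁, x₂ᵢ₊₁, x₂ᵢ₊₂]` holds:
`x₂ᵢ₊₂ x₂ᵢ₊₁ x₂ᵢ₋₁ = x₂ᵢ₊₁ x₂ᵢ₋₁ x₂ᵢ₊₂ = x₂ᵢ₋₁ x₂ᵢ₊₂ x₂ᵢ₊₁`. -/
theorem T2_simplified (n : ℕ) (hn : 4 ≤ n) (i : ℕ) (hi : 1 ≤ i ∧ i ≤ n - 3) :
    genH n (2 * i + 2) * genH n (2 * i + 1) * genH n (2 * i - 1) =
      genH n (2 * i + 1) * genH n (2 * i - 1) * genH n (2 * i + 2) ∧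
    genH n (2 * i + 1) * genH n (2 * i - 1) * genH n (2 * i + 2) =
      genH n (2 * i - 1) * genH n (2 * i + 2) * genH n (2 * i + 1) :=
  T2_simplified_general n i hi
end
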